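/- arXiv:1711.06054 — 2 statements merged into one kernel-verified Lean document; each statement's English description precedes it below -/
import Mathlib

section
/- Let S be a dense subsemigroup of ((0,∞),+), let (X, ⟨T_s⟩_{s∈S}) be a dynamical system, let L be a minimal left ideal of O⁺(S), and let x ∈ X. If there exists u ∈ L with T_u(x) = x, then there exists an idempotent u ∈ L with T_u(x) = x. -/
open Filter Topology Set

noncomputable section

/-- The extension of `+` on a discrete semigroup to its Stone–Čech compactification
(space of ultrafilters): `A ∈ p + q` iff `{x : -x + A ∈ q} ∈ p`. -/
def uadd {α : Type} [Add α] (p q : Ultrafilter α) : Ultrafilter α :=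
  p.bind fun a => q.map (a + ·)

/-- `O⁺(S) = {p ∈ βS : for all ε > 0, S ∩ (0,ε) ∈ p}`. -/
def Oplus (S : AddSubsemigroup ℝ) : Set (Ultrafilter S) :=
  {p | ∀ ε : ℝ, 0 < ε → {x : S | (x : ℝ) < ε} ∈ p}

def IsLeftIdealIn {α : Type} [Add α] (T L : Set (Ultrafilter α)) : Prop :=
  L.Nonempty ∧ L ⊆ T ∧ ∀ p ∈ T, ∀ q ∈ L, uadd p q ∈ L

def IsMinimalLeftIdealIn {α : Type} [Add α] (T L : Set (Ultrafilter α)) : Prop :=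
  IsLeftIdealIn T L ∧ ∀ L', IsLeftIdealIn T L' → L' ⊆ L → L' = L

/-- The smallest ideal `K(O⁺(S))`, described as the union of all minimal left ideals. -/
def KOplus (S : AddSubsemigroup ℝ) : Set (Ultrafilter S) :=
  {p | ∃ L, IsMinimalLeftIdealIn (Oplus S) L ∧ p ∈ L}

/-- A dynamical system over an additive semigroup. -/
structure DynSys (σ : Type) [Add σ] where
  X : Type
  [ts : TopologicalSpace X]
  [cs : CompactSpace X]
  [t2 : T2Space X]
  T : σ → X → X
  cont : ∀ s, Continuous (T s)
  comp : ∀ s t, T s ∘ T t = T (s + t)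

attribute [instance] DynSys.ts DynSys.cs DynSys.t2

/-- `T_p(x) = p-lim_{s ∈ S} T_s(x)`. -/
def DynSys.Tp {σ : Type} [Add σ] (D : DynSys σ) (p : Ultrafilter σ) (x : D.X) : D.X :=
  (p.map fun s => D.T s x).lim

/-- `B` is syndetic near zero. -/
def syndeticNearZero (S : AddSubsemigroup ℝ) (A : Set S) : Prop :=
  ∀ ε : ℝ, 0 < ε → ∃ F : Finset S, F.Nonempty ∧ (∀ t ∈ F, (t : ℝ) < ε) ∧
    ∃ δ : ℝ, 0 < δ ∧ ∀ s : S, (s : ℝ) < δ → ∃ t ∈ F, t + s ∈ A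

def uniformlyRecurrentNearZero (S : AddSubsemigroup ℝ) (D : DynSys S) (x : D.X) : Prop :=
  ∀ W ∈ nhds x, syndeticNearZero S {s : S | D.T s x ∈ W}

/-- `x` and `y` are proximal near zero. -/
def proximalNearZero (S : AddSubsemigroup ℝ) (D : DynSys S) (x y : D.X) : Prop :=
  ∀ U ∈ nhdsSet (Set.diagonal D.X), ∀ ε : ℝ, 0 < ε →
    ∃ s : S, (s : ℝ) < ε ∧ (D.T s x, D.T s y) ∈ U

/-- `A` is piecewise syndetic near zero. -/
def piecewiseSyndeticNearZero (S : AddSubsemigroup ℝ) (A : Set S) : Prop :=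
  ∃ (F : ℕ → Finset S) (δ : ℕ → ℝ),
    (∀ n : ℕ, (F n).Nonempty ∧ (∀ t ∈ F n, (t : ℝ) < 1 / (n + 1)) ∧
      0 < δ n ∧ δ n < 1 / (n + 1)) ∧
    ∀ G : Finset S, ∀ μ : ℝ, 0 < μ → ∃ x : S, (x : ℝ) < μ ∧
      ∀ n : ℕ, ∀ g ∈ G, (g : ℝ) < δ n → ∃ t ∈ F n, t + (g + x) ∈ A

/-- `A` is a J-set near zero. -/
def JSetNearZero (S : AddSubsemigroup ℝ) (A : Set S) : Prop :=
  ∀ F : Finset (ℕ → S), F.Nonempty →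
    (∀ f ∈ F, Tendsto (fun n => ((f n : S) : ℝ)) atTop (nhds 0)) →
    ∀ δ : ℝ, 0 < δ → ∃ a : S, (a : ℝ) < δ ∧ ∃ H : Finset ℕ, H.Nonempty ∧
      ∀ f ∈ F, ∃ b ∈ A, (b : ℝ) = (a : ℝ) + ∑ t ∈ H, ((f t : S) : ℝ)

def J0 (S : AddSubsemigroup ℝ) : Set (Ultrafilter S) :=
  {p | p ∈ Oplus S ∧ ∀ A ∈ p, JSetNearZero S A}

/-- jointly intermittently uniformly recurrent near zero. -/
def JIUR0 (S : AddSubsemigroup ℝ) (D : DynSys S) (x y : D.X) : Prop :=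
  ∀ U ∈ nhds y, piecewiseSyndeticNearZero S {s : S | D.T s x ∈ U ∧ D.T s y ∈ U}

/-- jointly intermittently almost uniformly recurrent near zero. -/
def JIAUR0 (S : AddSubsemigroup ℝ) (D : DynSys S) (x y : D.X) : Prop :=
  ∀ U ∈ nhds y, JSetNearZero S {s : S | D.T s x ∈ U ∧ D.T s y ∈ U}

section AuxStmt3

theorem tendsto_TpAux {σ : Type} [Add σ] (D : DynSys σ) (p : Ultrafilter σ) (x : D.X) :
    Tendsto (fun s => D.T s x) p (nhds (D.Tp p x)) :=
  Ultrafilter.le_nhds_lim _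

theorem Tp_eq_extendAux {σ : Type} [Add σ] (D : DynSys σ) (x : D.X) (p : Ultrafilter σ) :
    D.Tp p x = Ultrafilter.extend (fun s => D.T s x) p :=
  (ultrafilter_extend_eq_iff.mpr (tendsto_TpAux D p x)).symm

theorem continuous_TpAux {σ : Type} [Add σ] (D : DynSys σ) (x : D.X) :
    Continuous (fun p : Ultrafilter σ => D.Tp p x) := by
  have : (fun p : Ultrafilter σ => D.Tp p x) = Ultrafilter.extend (fun s => D.T s x) :=
    funext fun p => Tp_eq_extendAux D x p
  rw [this]
  exact continuous_ultrafilter_extend _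

theorem Tp_uaddAux {σ : Type} [Add σ] (D : DynSys σ) (p q : Ultrafilter σ) (x : D.X) :
    D.Tp (uadd p q) x = D.Tp p (D.Tp q x) := by
  refine tendsto_nhds_unique (tendsto_TpAux D (uadd p q) x) ?_
  set y := D.Tp q x
  set z := D.Tp p y
  intro U hU
  obtain ⟨C, ⟨hCnhds, hCclosed⟩, hCU⟩ := (closed_nhds_basis z).mem_iff.mp hU
  have hintC : interior C ∈ nhds z := interior_mem_nhds.mpr hCnhds
  have hp : ∀ᶠ a in (p : Filter σ), D.T a y ∈ interior C :=
    tendsto_TpAux D p y hintC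
  have key : ∀ᶠ a in (p : Filter σ), ∀ᶠ b in (q : Filter σ), D.T (a + b) x ∈ U := by
    filter_upwards [hp] with a ha
    have h1 : Tendsto (fun b => D.T a (D.T b x)) q (nhds (D.T a y)) :=
      ((D.cont a).tendsto y).comp (tendsto_TpAux D q x)
    have h2 : ∀ᶠ b in (q : Filter σ), D.T a (D.T b x) ∈ interior C :=
      h1 (isOpen_interior.mem_nhds ha)
    filter_upwards [h2] with b hb
    have : D.T a (D.T b x) = D.T (a + b) x := congrFun (D.comp a b) x
    rw [← this]
    exact hCU (interior_subset hb)
  exact key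

theorem uadd_mem_OplusAux (S : AddSubsemigroup ℝ) (hpos : ∀ x : ℝ, x ∈ S → 0 < x)
    {p q : Ultrafilter S} (hp : p ∈ Oplus S) (hq : q ∈ Oplus S) :
    uadd p q ∈ Oplus S := by
  intro ε hε
  have hmem : {a : S | {b : S | (↑(a + b) : ℝ) < ε} ∈ q} ∈ p := by
    have h1 : {a : S | (a : ℝ) < ε / 2} ∈ p := hp (ε / 2) (by linarith)
    filter_upwards [h1] with a ha
    have h2 : {b : S | (b : ℝ) < ε / 2} ∈ q := hq (ε / 2) (by linarith)
    filter_upwards [h2] with b hb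
    show ((a : ℝ) + (b : ℝ)) < ε
    linarith
  exact hmem

theorem uadd_assocAux {α : Type} [AddSemigroup α] (p q r : Ultrafilter α) :
    uadd (uadd p q) r = uadd p (uadd q r) := by
  letI := Ultrafilter.add (M := α)
  letI := Ultrafilter.addSemigroup (M := α)
  show (p + q) + r = p + (q + r)
  exact add_assoc p q r

theorem continuous_uadd_leftAux {α : Type} [AddSemigroup α] (q : Ultrafilter α) :
    Continuous (fun p => uadd p q) := by
  letI := Ultrafilter.add (M := α)
  letI := Ultrafilter.addSemigroup (M := α)
  exact Ultrafilter.continuous_add_left q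

theorem isClosed_OplusAux (S : AddSubsemigroup ℝ) : IsClosed (Oplus S) := by
  have : Oplus S = ⋂ ε ∈ {ε : ℝ | 0 < ε}, {p : Ultrafilter S | {x : S | (x : ℝ) < ε} ∈ p} := by
    ext p
    simp [Oplus, Set.mem_iInter]
  rw [this]
  exact isClosed_biInter fun ε _ => ultrafilter_isClosed_basic _

end AuxStmt3

theorem stmt3 (S : AddSubsemigroup ℝ)
    (hpos : ∀ x : ℝ, x ∈ S → 0 < x)
    (hdense : Set.Ioi (0 : ℝ) ⊆ closure (S : Set ℝ))
    (D : DynSys S) (L : Set (Ultrafilter S))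
    (hL : IsMinimalLeftIdealIn (Oplus S) L) (x : D.X)
    (h : ∃ u ∈ L, D.Tp u x = x) :
    ∃ u ∈ L, uadd u u = u ∧ D.Tp u x = x := by
    classical
  obtain ⟨u0, hu0L, hu0x⟩ := h
  obtain ⟨⟨⟨q0, hq0⟩, hLsub, hLideal⟩, hLmin⟩ := hL
  -- L is closed: it equals the image of the compact set Oplus S under (· + q0)
  have hOplus_compact : IsCompact (Oplus S) :=
    (isClosed_OplusAux S).isCompact
  have hLclosed : IsClosed L := by
    set L' := (fun p => uadd p q0) '' (Oplus S) with hL'def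
    have hL'subL : L' ⊆ L := by
      rintro _ ⟨p, hp, rfl⟩
      exact hLideal p hp q0 hq0
    have hL'ideal : IsLeftIdealIn (Oplus S) L' := by
      refine ⟨⟨uadd q0 q0, ⟨q0, hLsub hq0, rfl⟩⟩, fun r hr => hLsub (hL'subL hr), ?_⟩
      rintro p hp _ ⟨p', hp', rfl⟩
      refine ⟨uadd p p', uadd_mem_OplusAux S hpos hp hp', ?_⟩
      show uadd (uadd p p') q0 = uadd p (uadd p' q0)
      exact uadd_assocAux p p' q0
    have hL'eq : L' = L := hLmin L' hL'ideal hL'subL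
    have hcomp : IsCompact L' :=
      hOplus_compact.image (continuous_uadd_leftAux q0)
    rw [← hL'eq]
    exact hcomp.isClosed
  -- The set K
  set K : Set (Ultrafilter S) := {v ∈ L | D.Tp v x = x} with hKdef
  have hKclosed : IsClosed K := by
    have : K = L ∩ (fun v => D.Tp v x) ⁻¹' {x} := by
      ext v; simp [hKdef]
    rw [this]
    exact hLclosed.inter (isClosed_singleton.preimage (continuous_TpAux D x))
  have hKne : K.Nonempty := ⟨u0, hu0L, hu0x⟩
  have hKadd : ∀ u ∈ K, ∀ v ∈ K, uadd u v ∈ K := by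
    rintro u ⟨huL, hux⟩ v ⟨hvL, hvx⟩
    refine ⟨hLideal u (hLsub huL) v hvL, ?_⟩
    rw [Tp_uaddAux, hvx, hux]
  -- apply Ellis–Numakura
  letI : AddSemigroup (Ultrafilter S) := Ultrafilter.addSemigroup
  have hadd_eq : ∀ p q : Ultrafilter S, p + q = uadd p q := fun p q => rfl
  obtain ⟨m, hmK, hmidem⟩ :=
    exists_idempotent_in_compact_add_subsemigroup
      (fun r => by rw [show (· + r) = (fun p => uadd p r) from funext fun p => hadd_eq p r]
                   exact continuous_uadd_leftAux r)
      K hKne hKclosed.isCompact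
      (fun u hu v hv => by rw [hadd_eq]; exact hKadd u hu v hv)
  exact ⟨m, hmK.1, by rw [← hadd_eq]; exact hmidem, hmK.2⟩
end
end

section
/- Let S be a dense subsemigroup of ((0,∞),+), let (X, ⟨T_s⟩_{s∈S}) be a dynamical system, and let x ∈ X. Then there exists a point y in the closure of {T_s(x) : s ∈ S} that is uniformly recurrent near zero and such that x and y are proximal near zero. -/
open Filter Topology Set

noncomputable section

/-! ### Auxiliary lemmas -/

section UaddBasics

variable {α : Type} [AddSemigroup α]

theorem mem_uadd {p q : Ultrafilter α} {A : Set α} :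
    A ∈ uadd p q ↔ {a | {b | a + b ∈ A} ∈ q} ∈ p := Iff.rfl

theorem uadd_assoc' (p q r : Ultrafilter α) : uadd (uadd p q) r = uadd p (uadd q r) := by
  ext A
  simp only [mem_uadd, Set.mem_setOf_eq]
  apply Iff.of_eq
  congr 1
  ext a
  simp only [Set.mem_setOf_eq, mem_uadd]
  apply Iff.of_eq
  congr 1
  ext b
  simp only [Set.mem_setOf_eq]
  apply Iff.of_eq
  congr 1
  ext c
  simp [add_assoc]

theorem continuous_uadd_right (q : Ultrafilter α) :
    Continuous (fun p => uadd p q) :=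
  ultrafilterBasis_is_basis.continuous_iff.2 <| Set.forall_mem_range.mpr fun s =>
    ultrafilter_isOpen_basic {a : α | {b | a + b ∈ s} ∈ q}

theorem exists_uadd_idem {L : Set (Ultrafilter α)} (hne : L.Nonempty) (hcl : IsClosed L)
    (hadd : ∀ p ∈ L, ∀ q ∈ L, uadd p q ∈ L) : ∃ u ∈ L, uadd u u = u := by
  letI : Semigroup (Ultrafilter α) := { mul := uadd, mul_assoc := uadd_assoc' }
  exact exists_idempotent_in_compact_subsemigroup (fun r => continuous_uadd_right r)
    L hne hcl.isCompact hadd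

end UaddBasics

section OplusBasics

variable {S : AddSubsemigroup ℝ}

theorem exists_small (hdense : Set.Ioi (0 : ℝ) ⊆ closure (S : Set ℝ)) {ε : ℝ} (hε : 0 < ε) :
    ∃ s : S, (s : ℝ) < ε := by
  have h : (ε / 2 : ℝ) ∈ closure (S : Set ℝ) := hdense (by simpa using half_pos hε)
  have : (Set.Ioo (0:ℝ) ε ∩ (S : Set ℝ)).Nonempty := by
    rw [mem_closure_iff] at h
    exact h _ isOpen_Ioo ⟨half_pos hε, half_lt_self hε⟩
  obtain ⟨x, hx1, hx2⟩ := this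
  exact ⟨⟨x, hx2⟩, hx1.2⟩

theorem oplus_nonempty (hdense : Set.Ioi (0 : ℝ) ⊆ closure (S : Set ℝ)) :
    (Oplus S).Nonempty := by
  choose f hf using fun n : ℕ => exists_small hdense (by positivity : (0:ℝ) < 1 / (n + 1))
  have hne : (Filter.map f Filter.atTop).NeBot := Filter.map_neBot
  refine ⟨Ultrafilter.of (Filter.map f Filter.atTop), fun ε hε => ?_⟩
  have h0 : Filter.Tendsto (fun n : ℕ => (1:ℝ) / (n + 1)) Filter.atTop (nhds 0) :=
    tendsto_one_div_add_atTop_nhds_zero_nat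
  have h1 : ∀ᶠ n : ℕ in Filter.atTop, ((f n : ℝ)) < ε := by
    filter_upwards [h0.eventually_lt_const hε] with n hn using lt_trans (hf n) hn
  exact Ultrafilter.of_le (Filter.map f Filter.atTop) (Filter.mem_map.mpr h1)

theorem oplus_isClosed : IsClosed (Oplus S) := by
  have : Oplus S = ⋂ (ε : ℝ) (_ : 0 < ε), {p : Ultrafilter S | {x : S | (x : ℝ) < ε} ∈ p} := by
    ext p; simp [Oplus]
  rw [this]
  exact isClosed_iInter fun ε => isClosed_iInter fun _ => ultrafilter_isClosed_basic _

theorem oplus_add {p q : Ultrafilter S} (hp : p ∈ Oplus S) (hq : q ∈ Oplus S) :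
    uadd p q ∈ Oplus S := by
  intro ε hε
  rw [mem_uadd]
  refine Filter.mem_of_superset (hp (ε / 2) (half_pos hε)) fun a ha => ?_
  refine Filter.mem_of_superset (hq (ε / 2) (half_pos hε)) fun b hb => ?_
  simp only [Set.mem_setOf_eq] at *
  push_cast
  linarith

/-- closed left ideals of `O⁺(S)` -/
def ClosedLI (S : AddSubsemigroup ℝ) (L : Set (Ultrafilter S)) : Prop :=
  L.Nonempty ∧ IsClosed L ∧ L ⊆ Oplus S ∧ ∀ p ∈ Oplus S, ∀ q ∈ L, uadd p q ∈ L

theorem exists_minimal_closedLI (hdense : Set.Ioi (0 : ℝ) ⊆ closure (S : Set ℝ)) :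
    ∃ L, ClosedLI S L ∧ ∀ L', ClosedLI S L' → L' ⊆ L → L' = L := by
  have hchains : ∀ c ⊆ {L | ClosedLI S L}, IsChain (· ⊆ ·) c → c.Nonempty →
      ∃ lb ∈ {L | ClosedLI S L}, ∀ s ∈ c, lb ⊆ s := by
    intro c hc hchain hcne
    haveI : Nonempty c := hcne.to_subtype
    refine ⟨⋂₀ c, ⟨?_, isClosed_sInter fun L hL => (hc hL).2.1, ?_, ?_⟩,
      fun s hs => Set.sInter_subset_of_mem hs⟩
    · apply IsCompact.nonempty_sInter_of_directed_nonempty_isCompact_isClosed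
      · exact fun U hU V hV => (hchain.total hU hV).elim
          (fun h => ⟨U, hU, subset_rfl, h⟩) (fun h => ⟨V, hV, h, subset_rfl⟩)
      · exact fun U hU => (hc hU).1
      · exact fun U hU => (hc hU).2.1.isCompact
      · exact fun U hU => (hc hU).2.1
    · obtain ⟨L, hL⟩ := hcne
      exact (Set.sInter_subset_of_mem hL).trans (hc hL).2.2.1
    · intro p hp q hq
      exact Set.mem_sInter.mpr fun L hL => (hc hL).2.2.2 p hp q (hq L hL)
  obtain ⟨m, -, hm⟩ := zorn_superset_nonempty {L | ClosedLI S L} hchains (Oplus S)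
    ⟨oplus_nonempty hdense, oplus_isClosed, le_refl _, fun p hp q hq => oplus_add hp hq⟩
  refine ⟨m, hm.1, fun L' hL' hsub => ?_⟩
  obtain ⟨r, hr⟩ := hL'.1
  have him : ClosedLI S ((fun p => uadd p r) '' Oplus S) := by
    refine ⟨(oplus_nonempty hdense).image _,
      (oplus_isClosed.isCompact.image (continuous_uadd_right r)).isClosed, ?_, ?_⟩
    · rintro _ ⟨p, hp, rfl⟩; exact oplus_add hp (hL'.2.2.1 hr)
    · rintro p hp _ ⟨p', hp', rfl⟩
      exact ⟨uadd p p', oplus_add hp hp', uadd_assoc' p p' r⟩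
  have h1 : (fun p => uadd p r) '' Oplus S ⊆ L' := by
    rintro _ ⟨p, hp, rfl⟩; exact hL'.2.2.2 p hp r hr
  have h2 : (fun p => uadd p r) '' Oplus S = m :=
    subset_antisymm (h1.trans hsub) (hm.2 him (h1.trans hsub))
  exact subset_antisymm hsub (h2 ▸ h1)

end OplusBasics

section Dyn

variable {S : AddSubsemigroup ℝ} (D : DynSys S)

theorem tendsto_Tp (p : Ultrafilter S) (x : D.X) :
    Filter.Tendsto (fun s => D.T s x) ↑p (nhds (D.Tp p x)) := by
  have h := Ultrafilter.le_nhds_lim (p.map fun s => D.T s x)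
  rwa [Ultrafilter.coe_map] at h

theorem Tp_unique {p : Ultrafilter S} {x : D.X} {z : D.X}
    (h : Filter.Tendsto (fun s => D.T s x) ↑p (nhds z)) : D.Tp p x = z :=
  tendsto_nhds_unique (tendsto_Tp D p x) h

theorem Tp_uadd (p q : Ultrafilter S) (x : D.X) :
    D.Tp (uadd p q) x = D.Tp p (D.Tp q x) := by
  apply Tp_unique
  rw [Filter.tendsto_def]
  intro W hW
  obtain ⟨O, hOW, hO, hzO⟩ := mem_nhds_iff.mp hW
  refine Filter.mem_of_superset (?_ : {s | D.T s x ∈ O} ∈ (uadd p q : Filter S))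
    fun s hs => hOW hs
  rw [Ultrafilter.mem_coe, mem_uadd]
  have hp : {a : S | D.T a (D.Tp q x) ∈ O} ∈ p :=
    tendsto_Tp D p (D.Tp q x) (hO.mem_nhds hzO)
  refine Filter.mem_of_superset hp fun a ha => ?_
  have hq : {b : S | D.T b x ∈ D.T a ⁻¹' O} ∈ q :=
    tendsto_Tp D q x (((hO.preimage (D.cont a)).mem_nhds ha))
  refine Filter.mem_of_superset hq fun b hb => ?_
  have hcomp : D.T a (D.T b x) = D.T (a + b) x := congrFun (D.comp a b) x
  simp only [Set.mem_setOf_eq, Set.mem_preimage] at *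
  rwa [hcomp] at hb

theorem Tp_mem_closed {p : Ultrafilter S} {x : D.X} {C : Set D.X} (hC : IsClosed C)
    (h : {s : S | D.T s x ∈ C} ∈ p) : D.Tp p x ∈ C :=
  hC.mem_of_tendsto (tendsto_Tp D p x) h

end Dyn

theorem syndetic_mono {S : AddSubsemigroup ℝ} {A B : Set S} (hAB : A ⊆ B)
    (h : syndeticNearZero S A) : syndeticNearZero S B := by
  intro ε hε
  obtain ⟨F, hF1, hF2, δ, hδ, hδ2⟩ := h ε hε
  exact ⟨F, hF1, hF2, δ, hδ, fun s hs => by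
    obtain ⟨t, ht, hts⟩ := hδ2 s hs; exact ⟨t, ht, hAB hts⟩⟩

theorem image_uadd_eq_of_minimal {S : AddSubsemigroup ℝ}
    (hdense : Set.Ioi (0 : ℝ) ⊆ closure (S : Set ℝ)) {L : Set (Ultrafilter S)}
    (hL : ClosedLI S L) (hmin : ∀ L', ClosedLI S L' → L' ⊆ L → L' = L)
    {r : Ultrafilter S} (hr : r ∈ L) :
    (fun p => uadd p r) '' Oplus S = L := by
  apply hmin
  · refine ⟨(oplus_nonempty hdense).image _,
      (oplus_isClosed.isCompact.image (continuous_uadd_right r)).isClosed, ?_, ?_⟩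
    · rintro _ ⟨p, hp, rfl⟩; exact oplus_add hp (hL.2.2.1 hr)
    · rintro p hp _ ⟨p', hp', rfl⟩
      exact ⟨uadd p p', oplus_add hp hp', uadd_assoc' p p' r⟩
  · rintro _ ⟨p, hp, rfl⟩; exact hL.2.2.2 p hp r hr

theorem stmt5 (S : AddSubsemigroup ℝ)
    (hpos : ∀ x : ℝ, x ∈ S → 0 < x)
    (hdense : Set.Ioi (0 : ℝ) ⊆ closure (S : Set ℝ))
    (D : DynSys S) (x : D.X) :
    ∃ y ∈ closure (Set.range fun s : S => D.T s x),
      uniformlyRecurrentNearZero S D y ∧ proximalNearZero S D x y := by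
  classical
  obtain ⟨L, hL, hLmin⟩ := exists_minimal_closedLI hdense
  obtain ⟨u, huL, huu⟩ := exists_uadd_idem hL.1 hL.2.1
    (fun p hp q hq => hL.2.2.2 p (hL.2.2.1 hp) q hq)
  have huO : u ∈ Oplus S := hL.2.2.1 huL
  set y := D.Tp u x with hy
  have hyy : D.Tp u y = y := by rw [hy, ← Tp_uadd, huu]
  refine ⟨y, ?_, ?_, ?_⟩
  · exact hy ▸ mem_closure_of_tendsto (tendsto_Tp D u x)
      (Filter.Eventually.of_forall fun s => Set.mem_range_self s)
  · -- uniformly recurrent near zero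
    intro W hW
    obtain ⟨W', hW'W, hW'open, hyW'⟩ := mem_nhds_iff.mp hW
    set B : Set S := {s : S | D.T s y ∈ W'} with hBdef
    refine syndetic_mono (fun s hs => hW'W hs) ?_
    by_contra hsyn
    simp only [syndeticNearZero, not_forall] at hsyn
    push_neg at hsyn
    obtain ⟨ε, hε, hcon⟩ := hsyn
    let ι := {T : Finset S // ∀ t ∈ T, (t : ℝ) < ε} × {δ : ℝ // 0 < δ}
    let C : ι → Set S := fun i => {s : S | (s : ℝ) < i.2.1 ∧ ∀ t ∈ i.1.1, t + s ∉ B}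
    have hCne : ∀ i, (C i).Nonempty := by
      rintro ⟨⟨T, hT⟩, ⟨δ, hδ⟩⟩
      by_cases hTne : T.Nonempty
      · obtain ⟨s, hs1, hs2⟩ := hcon T hTne hT δ hδ
        exact ⟨s, hs1, hs2⟩
      · obtain ⟨s, hs⟩ := exists_small hdense hδ
        exact ⟨s, hs, fun t ht => absurd ⟨t, ht⟩ hTne⟩
    haveI : Nonempty ι := ⟨⟨⟨∅, by simp⟩, ⟨1, one_pos⟩⟩⟩
    have hdir : Directed (· ≥ ·) (fun i => Filter.principal (C i)) := by
      rintro ⟨⟨T1, hT1⟩, ⟨δ1, hδ1⟩⟩ ⟨⟨T2, hT2⟩, ⟨δ2, hδ2⟩⟩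
      refine ⟨⟨⟨T1 ∪ T2, ?_⟩, ⟨min δ1 δ2, lt_min hδ1 hδ2⟩⟩, ?_, ?_⟩
      · intro t ht
        rcases Finset.mem_union.mp ht with h | h
        exacts [hT1 t h, hT2 t h]
      · exact Filter.principal_mono.mpr fun s hs =>
          ⟨lt_of_lt_of_le hs.1 (min_le_left _ _), fun t ht => hs.2 t (Finset.mem_union_left _ ht)⟩
      · exact Filter.principal_mono.mpr fun s hs =>
          ⟨lt_of_lt_of_le hs.1 (min_le_right _ _), fun t ht => hs.2 t (Finset.mem_union_right _ ht)⟩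
    haveI hFne : (⨅ i, Filter.principal (C i)).NeBot :=
      Filter.iInf_neBot_of_directed' hdir fun i => Filter.principal_neBot_iff.mpr (hCne i)
    set q := Ultrafilter.of (⨅ i, Filter.principal (C i)) with hqdef
    have hqmem : ∀ i, C i ∈ q := fun i =>
      Ultrafilter.of_le _ (Filter.mem_iInf_of_mem i (Filter.mem_principal_self _))
    have hqO : q ∈ Oplus S := fun μ hμ =>
      Filter.mem_of_superset (hqmem ⟨⟨∅, by simp⟩, ⟨μ, hμ⟩⟩) fun s hs => hs.1
    have hclaim : ∀ p ∈ Oplus S, D.Tp (uadd p q) y ∈ W'ᶜ := by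
      intro p hp
      refine Tp_mem_closed D hW'open.isClosed_compl ?_
      rw [show {s : S | D.T s y ∈ W'ᶜ} ∈ (uadd p q) ↔
        {a : S | {b : S | a + b ∈ {s : S | D.T s y ∈ W'ᶜ}} ∈ q} ∈ p from mem_uadd]
      refine Filter.mem_of_superset (hp ε hε) fun a (ha : (a : ℝ) < ε) => ?_
      refine Filter.mem_of_superset
        (hqmem ⟨⟨{a}, by simpa using ha⟩, ⟨1, one_pos⟩⟩) fun b hb => ?_
      exact hb.2 a (Finset.mem_singleton_self a)
    have hquL : uadd q u ∈ L := hL.2.2.2 q hqO u huL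
    obtain ⟨w, hwO, hwu⟩ : ∃ w ∈ Oplus S, uadd w (uadd q u) = u := by
      have h := image_uadd_eq_of_minimal hdense hL hLmin hquL
      have hu : u ∈ (fun p => uadd p (uadd q u)) '' Oplus S := h.symm ▸ huL
      obtain ⟨w, hw, hw2⟩ := hu
      exact ⟨w, hw, hw2⟩
    have hyuq : D.Tp (uadd w q) y = y := by
      calc D.Tp (uadd w q) y = D.Tp (uadd w q) (D.Tp u y) := by rw [hyy]
        _ = D.Tp (uadd (uadd w q) u) y := (Tp_uadd D _ _ _).symm
        _ = D.Tp (uadd w (uadd q u)) y := by rw [uadd_assoc']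
        _ = D.Tp u y := by rw [hwu]
        _ = y := hyy
    have hfinal := hclaim w hwO
    rw [hyuq] at hfinal
    exact hfinal hyW'
  · -- proximal near zero
    intro U hU ε hε
    have hU' : U ∈ nhds (y, y) := mem_nhdsSet_iff_forall.mp hU (y, y) rfl
    have h1 : Filter.Tendsto (fun s : S => D.T s x) ↑u (nhds y) := hy ▸ tendsto_Tp D u x
    have h2 : Filter.Tendsto (fun s : S => D.T s y) ↑u (nhds y) := by
      have := tendsto_Tp D u y
      rwa [hyy] at this
    have htend : Filter.Tendsto (fun s : S => (D.T s x, D.T s y)) ↑u (nhds (y, y)) :=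
      h1.prodMk_nhds h2
    have hA : {s : S | (D.T s x, D.T s y) ∈ U} ∈ u := htend hU'
    have hB : {s : S | (s : ℝ) < ε} ∈ u := huO ε hε
    obtain ⟨s, hs⟩ := Ultrafilter.nonempty_of_mem (Filter.inter_mem hA hB)
    exact ⟨s, hs.2, hs.1⟩
end
end
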